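/- The family B_c of sets U_α(α₁,…,α_k) = ↑α \ (↑α₁ ∪ ⋯ ∪ ↑α_k), where α ∈ I_λ^n and α₁,…,α_k ∈ ↑α \ {α}, is a base for a topology τ_c on I_λ^n, and (I_λ^n, τ_c) is a compact Hausdorff space. -/

import Mathlib

/-!
Ordered by restriction, `I_λ^n` is a partial order in which two elements with a common upper
bound `h` have a least upper bound (the restriction of `h` to the union of their domains), and
in which strictly increasing chains have length at most `n`. In such an order `↑a ∩ ↑b` is empty
or principal, so a nonempty intersection of two basic sets is again basic, and distinct `x`, `y`
are separated by `↑x` and `↑y` if they have no common upper bound, and otherwise (say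
`x ∨ y ≠ x`) by `↑x \ ↑(x ∨ y)` and `↑y`. For compactness, an ultrafilter containing `↑a`
contains `↑x` for some maximal such `x ≥ a`; by maximality it contains no `↑b` with `b ≰ x`
(else it would contain `↑(x ∨ b)`), hence it converges to `x`.
-/

open Set Topology

universe v

namespace ISemi

/-- The set of partial injective transformations (partial bijections) of `ι`
with rank (cardinality of the range, equivalently of the domain) at most `n`. -/
def Elem (ι : Type*) (n : ℕ) : Type _ :=
  {f : ι ≃. ι // {a : ι | (f a).isSome}.encard ≤ (n : ℕ∞)}

variable {ι : Type*} {n : ℕ}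

/-- Composition of partial bijections (written multiplicatively). -/
instance : Semigroup (Elem ι n) where
  mul f g := ⟨f.1.trans g.1, by
    refine le_trans (Set.encard_mono ?_) f.2
    intro a ha
    simp only [Set.mem_setOf_eq] at *
    rcases Option.isSome_iff_exists.1 ha with ⟨c, hc⟩
    rcases (PEquiv.trans_eq_some _ _ _ _).1 hc with ⟨b, hb, -⟩
    simp [hb]⟩
  mul_assoc f g h := Subtype.ext (PEquiv.trans_assoc f.1 g.1 h.1)

/-- The inverse partial bijection. -/
def inv (f : Elem ι n) : Elem ι n := ⟨f.1.symm, by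
  have key : ∀ (g : ι ≃. ι), {b : ι | (g.symm b).isSome} ⊆
      (fun p : {a : ι | (g a).isSome} => (g p.1).get p.2) '' Set.univ := by
    intro g b hb
    rcases Option.isSome_iff_exists.1 hb with ⟨a, ha⟩
    have ha' : b ∈ g a := (PEquiv.mem_iff_mem g).1 (Option.mem_def.2 ha)
    simp only [Option.mem_def] at ha'
    refine ⟨⟨a, ?_⟩, Set.mem_univ _, ?_⟩
    · simp [Set.mem_setOf_eq, ha']
    · simp [ha']
  calc {b : ι | (f.1.symm b).isSome}.encard
      ≤ ((fun p : {a : ι | (f.1 a).isSome} => (f.1 p.1).get p.2) '' Set.univ).encard :=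
        Set.encard_mono (key f.1)
    _ ≤ (Set.univ : Set {a : ι | (f.1 a).isSome}).encard := Set.encard_image_le _ _
    _ = {a : ι | (f.1 a).isSome}.encard := (Set.encard_univ _).trans (ENat.card_coe_set_eq _)
    _ ≤ (n : ℕ∞) := f.2⟩

/-- The zero (the empty partial map). -/
def zero (ι : Type*) (n : ℕ) : Elem ι n := ⟨⊥, by simp [PEquiv.bot_apply]⟩

/-- idempotents -/
def IsIdem (e : Elem ι n) : Prop := e * e = e

/-- The natural partial order on the inverse semigroup `Elem ι n`:
`f ≼ g` iff `f = e * g` for some idempotent `e`. -/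
def nle (f g : Elem ι n) : Prop := ∃ e : Elem ι n, IsIdem e ∧ f = e * g

/-- up-set of `f` w.r.t. the natural partial order -/
def upset (f : Elem ι n) : Set (Elem ι n) := {g | nle f g}

/-- the rank of a partial bijection: the cardinality of its domain (= range) -/
noncomputable def rank (f : Elem ι n) : ℕ∞ := {a : ι | (f.1 a).isSome}.encard

def dom (f : Elem ι n) : Set ι := {a : ι | (f.1 a).isSome}

def ran (f : Elem ι n) : Set ι := {b : ι | (f.1.symm b).isSome}

/-- A topology on `Elem ι n` is shift-continuous if all left and right
translations are continuous. -/
def ShiftContinuous (ι : Type*) (n : ℕ) [TopologicalSpace (Elem ι n)] : Prop :=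
  ∀ a : Elem ι n, Continuous (fun x : Elem ι n => a * x) ∧
    Continuous (fun x : Elem ι n => x * a)

/-- A space is feebly compact if every locally finite family of nonempty open
sets is finite. -/
def FeeblyCompact (X : Type*) [TopologicalSpace X] : Prop :=
  ∀ 𝒰 : Set (Set X), (∀ U ∈ 𝒰, IsOpen U ∧ U.Nonempty) →
    LocallyFinite (fun U : 𝒰 => (U : Set X)) → 𝒰.Finite

/-- A space is `d`-feebly compact if every discrete family of open sets is
finite; a family is discrete if every point has a neighbourhood meeting at
most one member of the family. -/
def DFeeblyCompact (X : Type*) [TopologicalSpace X] : Prop :=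
  ∀ 𝒰 : Set (Set X), (∀ U ∈ 𝒰, IsOpen U) →
    (∀ x : X, ∃ V ∈ 𝓝 x, {U ∈ 𝒰 | (U ∩ V).Nonempty}.Subsingleton) → 𝒰.Finite

/-- countably pracompact: there is a dense set `A` such that every infinite
subset of `A` has an accumulation point in `X`. -/
def CountablyPracompact (X : Type*) [TopologicalSpace X] : Prop :=
  ∃ A : Set X, Dense A ∧ ∀ B ⊆ A, B.Infinite → ∃ x : X, AccPt x (Filter.principal B)

/-- H-closed: closed in every Hausdorff space in which it embeds. -/
def HClosed (X : Type*) [TopologicalSpace X] : Prop :=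
  ∀ (Y : Type v) (_ : TopologicalSpace Y), T2Space Y →
    ∀ e : X → Y, IsEmbedding e → IsClosed (Set.range e)

/-- infra H-closed: every continuous image in a first-countable Hausdorff
space is closed. -/
def InfraHClosed (X : Type*) [TopologicalSpace X] : Prop :=
  ∀ (Y : Type v) (_ : TopologicalSpace Y), T2Space Y →
    FirstCountableTopology Y → ∀ f : X → Y, Continuous f → IsClosed (Set.range f)

/-- `Y`-compactness: every continuous image in `Y` is compact. -/
def YCompact (X : Type*) [TopologicalSpace X] (Y : Type*) [TopologicalSpace Y] : Prop :=
  ∀ f : X → Y, Continuous f → IsCompact (Set.range f)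

/-- scattered: every nonempty subset has a point isolated in it. -/
def Scattered (X : Type*) [TopologicalSpace X] : Prop :=
  ∀ S : Set X, S.Nonempty → ∃ x ∈ S, ∃ U : Set X, IsOpen U ∧ U ∩ S = {x}

/-- semiregular: there is a base consisting of regular open sets. -/
def Semiregular (X : Type*) [TopologicalSpace X] : Prop :=
  ∃ B : Set (Set X), TopologicalSpace.IsTopologicalBasis B ∧
    ∀ U ∈ B, interior (closure U) = U

/-- countably compact: every countable open cover has a finite subcover. -/
def CountablyCompact (X : Type*) [TopologicalSpace X] : Prop :=
  ∀ 𝒰 : Set (Set X), 𝒰.Countable → (∀ U ∈ 𝒰, IsOpen U) → ⋃₀ 𝒰 = Set.univ →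
    ∃ 𝒱 ⊆ 𝒰, 𝒱.Finite ∧ ⋃₀ 𝒱 = Set.univ

end ISemi

open ISemi in
/-- The base `B_c` of the topology `τ_c`. -/
def Bc (ι : Type*) (n : ℕ) : Set (Set (ISemi.Elem ι n)) :=
  {V | ∃ (f : ISemi.Elem ι n) (F : Finset (ISemi.Elem ι n)),
    ↑F ⊆ ISemi.upset f \ {f} ∧ V = ISemi.upset f \ ⋃ g ∈ F, ISemi.upset g}

/-- The topology `τ_c` generated by the base `B_c`. -/
def tauc (ι : Type*) (n : ℕ) : TopologicalSpace (ISemi.Elem ι n) :=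
  TopologicalSpace.generateFrom (Bc ι n)

namespace PEquiv

variable {α β : Type*}

lemma isSome_of_le {f g : α ≃. β} (h : f ≤ g) {a : α} (ha : (f a).isSome) : (g a).isSome := by
  obtain ⟨b, hb⟩ := Option.isSome_iff_exists.1 ha
  rw [h a b hb, Option.isSome_some]

lemma eq_of_le_of_isSome {f g : α ≃. β} (h : f ≤ g) (hg : ∀ a, (g a).isSome → (f a).isSome) :
    f = g := by
  refine le_antisymm h fun a b hb => ?_
  obtain ⟨c, hc⟩ := Option.isSome_iff_exists.1 (hg a (Option.isSome_iff_exists.2 ⟨b, hb⟩))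
  have hcb : some c = some b := (h a c hc).symm.trans hb
  rwa [← Option.some_inj.1 hcb]

lemma le_refl_of_trans_self {e : α ≃. α} (he : e.trans e = e) : e ≤ PEquiv.refl α := by
  intro a b hab
  obtain ⟨c, hac, hcb⟩ := (trans_eq_some e e a b).1 (he.symm ▸ hab)
  rw [Option.mem_def.1 hab] at hac
  cases hac
  rw [refl_apply, e.inj hcb hab]
  rfl

lemma trans_le_of_le_refl {e : α ≃. α} (he : e ≤ PEquiv.refl α) (g : α ≃. β) : e.trans g ≤ g := by
  intro a b hab
  obtain ⟨c, hac, hcb⟩ := (trans_eq_some e g a b).1 hab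
  cases Option.some_inj.1 ((he a c hac).symm.trans (refl_apply a))
  exact hcb

lemma ofSet_trans_eq_some (s : Set α) [DecidablePred (· ∈ s)] (g : α ≃. β) (a : α) (b : β) :
    (ofSet s).trans g a = some b ↔ a ∈ s ∧ g a = some b := by
  simp [trans_eq_some]

lemma self_trans_symm_trans_of_le {f g : α ≃. β} (h : f ≤ g) : (f.trans f.symm).trans g = f := by
  classical
  ext a b
  rw [self_trans_symm, ofSet_trans_eq_some, Set.mem_ofPred_eq, Option.isSome_iff_exists]
  constructor
  · rintro ⟨⟨c, hc⟩, hb⟩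
    rwa [← Option.some_inj.1 ((h a c hc).symm.trans hb)]
  · exact fun hb => ⟨⟨b, hb⟩, h a b hb⟩

lemma self_trans_symm_trans_self_trans_symm (f : α ≃. β) :
    (f.trans f.symm).trans (f.trans f.symm) = f.trans f.symm := by
  classical
  rw [self_trans_symm]
  ext a b
  rw [ofSet_trans_eq_some, ofSet_eq_some_iff]
  exact ⟨fun h => h.2, fun h => ⟨h.1 ▸ h.2, h⟩⟩

lemma apply_eq_of_le {f g : α ≃. β} (h : f ≤ g) {a : α} (ha : (f a).isSome) : f a = g a := by
  obtain ⟨b, hb⟩ := Option.isSome_iff_exists.1 ha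
  rw [hb, h a b hb]

lemma ofSet_trans_le_iff {f g h k : α ≃. β} (hf : f ≤ h) (hg : g ≤ h)
    [DecidablePred (· ∈ ({a | (f a).isSome} ∪ {a | (g a).isSome} : Set α))] :
    (ofSet ({a | (f a).isSome} ∪ {a | (g a).isSome})).trans h ≤ k ↔ f ≤ k ∧ g ≤ k := by
  constructor
  · refine fun hk => ⟨fun a b hb => hk a b ?_, fun a b hb => hk a b ?_⟩ <;>
      rw [Option.mem_def, ofSet_trans_eq_some]
    · exact ⟨Or.inl (Option.isSome_iff_exists.2 ⟨b, hb⟩), hf a b hb⟩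
    · exact ⟨Or.inr (Option.isSome_iff_exists.2 ⟨b, hb⟩), hg a b hb⟩
  · rintro ⟨hfk, hgk⟩ a b hb
    obtain ⟨ha | ha, hab⟩ := (ofSet_trans_eq_some _ h a b).1 hb
    · exact hfk a b ((apply_eq_of_le hf ha).trans hab)
    · exact hgk a b ((apply_eq_of_le hg ha).trans hab)

end PEquiv

open TopologicalSpace

section PrincipalDiff

variable {α : Type*} [PartialOrder α]

def HasBoundedPairSups (α : Type*) [PartialOrder α] : Prop :=
  ∀ a b : α, BddAbove {a, b} → ∃ c, IsLUB {a, b} c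

def principalDiffBasis (α : Type*) [PartialOrder α] : Set (Set α) :=
  {V | ∃ (a : α) (F : Finset α), ↑F ⊆ Ioi a ∧ V = Ici a \ ⋃ b ∈ F, Ici b}

lemma Ici_inter_Ici_eq_empty_or (h : HasBoundedPairSups α) (a b : α) :
    Ici a ∩ Ici b = ∅ ∨ ∃ c, Ici a ∩ Ici b = Ici c := by
  have hub : upperBounds {a, b} = Ici a ∩ Ici b := by
    rw [upperBounds_insert, upperBounds_singleton]
  by_cases hab : BddAbove ({a, b} : Set α)
  · obtain ⟨c, hc⟩ := h a b hab
    exact Or.inr ⟨c, hub ▸ hc.upperBounds_eq⟩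
  · rw [BddAbove, not_nonempty_iff_eq_empty] at hab
    exact Or.inl (hub ▸ hab)

lemma Ici_mem_principalDiffBasis (a : α) : Ici a ∈ principalDiffBasis α :=
  ⟨a, ∅, by simp, by simp⟩

lemma Ici_sdiff_Ici_mem_principalDiffBasis {a b : α} (hab : a < b) :
    Ici a \ Ici b ∈ principalDiffBasis α :=
  ⟨a, {b}, by simpa using hab, by simp⟩

-- The members of `F` need not lie above `a`: each `Ici b` may be replaced by
-- `Ici a ∩ Ici b`, which is empty or principal.
lemma Ici_sdiff_biUnion_mem_principalDiffBasis (h : HasBoundedPairSups α) {a : α}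
    {F : Finset α} (hF : ∀ b ∈ F, ¬ b ≤ a) :
    Ici a \ ⋃ b ∈ F, Ici b ∈ principalDiffBasis α := by
  classical
  have key : ∀ b, ∃ G : Finset α, Ici a ∩ Ici b = ⋃ c ∈ G, Ici c ∧ (¬ b ≤ a → ↑G ⊆ Ioi a) := by
    intro b
    rcases Ici_inter_Ici_eq_empty_or h a b with hab | ⟨c, hc⟩
    · exact ⟨∅, by simpa using hab, by simp⟩
    · refine ⟨{c}, by simpa using hc, fun hba => ?_⟩
      have hc' : c ∈ Ici a ∩ Ici b := hc ▸ self_mem_Ici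
      rw [Finset.coe_singleton, singleton_subset_iff]
      refine lt_of_le_of_ne hc'.1 ?_
      rintro rfl
      exact hba hc'.2
  choose G hG using key
  refine ⟨a, F.biUnion G, ?_, ?_⟩
  · simpa [Finset.coe_biUnion] using fun b hb => (hG b).2 (hF b hb)
  · rw [Finset.set_biUnion_biUnion]
    ext y
    simp only [mem_sdiff, mem_iUnion, ← (hG _).1, mem_inter_iff, exists_prop]
    exact and_congr_right fun ha => by simp only [ha, true_and]

theorem isTopologicalBasis_principalDiffBasis (h : HasBoundedPairSups α) :
    @IsTopologicalBasis α (generateFrom (principalDiffBasis α)) (principalDiffBasis α) := by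
  let _ := generateFrom (principalDiffBasis α)
  refine ⟨?_, sUnion_eq_univ_iff.2 fun x => ⟨Ici x, Ici_mem_principalDiffBasis x, self_mem_Ici⟩,
    rfl⟩
  rintro _ ⟨a₁, F₁, -, rfl⟩ _ ⟨a₂, F₂, -, rfl⟩ x ⟨⟨hx₁, hxF₁⟩, hx₂, hxF₂⟩
  obtain ⟨c, hc⟩ := (Ici_inter_Ici_eq_empty_or h a₁ a₂).resolve_left
    (nonempty_iff_ne_empty.1 ⟨x, hx₁, hx₂⟩)
  have hcx : x ∈ Ici c := hc ▸ ⟨hx₁, hx₂⟩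
  classical
  refine ⟨Ici c \ ⋃ b ∈ F₁ ∪ F₂, Ici b,
    Ici_sdiff_biUnion_mem_principalDiffBasis h fun b hb hbc => ?_, ?_, ?_⟩
  · rcases Finset.mem_union.1 hb with hb | hb
    exacts [hxF₁ (mem_iUnion₂.2 ⟨b, hb, hbc.trans hcx⟩),
      hxF₂ (mem_iUnion₂.2 ⟨b, hb, hbc.trans hcx⟩)]
  · rw [Finset.set_biUnion_union]
    exact ⟨hcx, fun hx => hx.elim hxF₁ hxF₂⟩
  · rw [Finset.set_biUnion_union, ← hc]
    rintro y ⟨⟨hy₁, hy₂⟩, hyF⟩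
    exact ⟨⟨hy₁, fun hy => hyF (Or.inl hy)⟩, hy₂, fun hy => hyF (Or.inr hy)⟩

theorem isCompact_Ici [TopologicalSpace α] [WellFoundedGT α] (h : HasBoundedPairSups α)
    (hB : IsTopologicalBasis (principalDiffBasis α)) (a : α) : IsCompact (Ici a) := by
  rw [isCompact_iff_ultrafilter_le_nhds]
  intro 𝒰 ha
  obtain ⟨x, hax, hx⟩ := exists_maximal_ge_of_wellFoundedGT (fun y => Ici y ∈ 𝒰) a
    (Filter.le_principal_iff.1 ha)
  refine ⟨x, hax, fun s hs => ?_⟩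
  obtain ⟨_, ⟨c, F, -, rfl⟩, ⟨hcx, hxF⟩, hs⟩ := hB.mem_nhds_iff.1 hs
  have hF : ∀ b ∈ F, (Ici b)ᶜ ∈ 𝒰 := fun b hb => by
    refine Ultrafilter.compl_mem_iff_notMem.2 fun hb𝒰 => ?_
    have hxb : Ici x ∩ Ici b ∈ 𝒰 := Filter.inter_mem hx.prop hb𝒰
    rcases Ici_inter_Ici_eq_empty_or h x b with hxb' | ⟨j, hj⟩
    · exact 𝒰.empty_notMem (hxb' ▸ hxb)
    · have hj' : j ∈ Ici x ∩ Ici b := hj ▸ self_mem_Ici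
      refine hx.not_gt (hj ▸ hxb) (lt_of_le_of_ne hj'.1 ?_)
      rintro rfl
      exact hxF (mem_iUnion₂.2 ⟨b, hb, hj'.2⟩)
  refine 𝒰.mem_of_superset (Filter.inter_mem hx.prop ((Filter.biInter_finset_mem F).2 hF)) ?_
  rintro y ⟨hxy, hyF⟩
  refine hs ⟨le_trans hcx hxy, ?_⟩
  simpa using hyF

theorem compactSpace_of_isTopologicalBasis [TopologicalSpace α] [OrderBot α] [WellFoundedGT α]
    (h : HasBoundedPairSups α) (hB : IsTopologicalBasis (principalDiffBasis α)) :
    CompactSpace α :=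
  ⟨Ici_bot (α := α) ▸ isCompact_Ici h hB ⊥⟩

lemma disjoint_nhds_of_Ici_inter_Ici_eq [TopologicalSpace α]
    (hB : IsTopologicalBasis (principalDiffBasis α)) {x y j : α}
    (hj : Ici x ∩ Ici y = Ici j) (hjx : j ≠ x) : Disjoint (𝓝 x) (𝓝 y) := by
  have hxj : x < j := lt_of_le_of_ne (hj ▸ self_mem_Ici : j ∈ Ici x ∩ Ici y).1 hjx.symm
  refine Filter.disjoint_of_disjoint_of_mem (s := Ici x \ Ici j) (t := Ici y) ?_
    (hB.mem_nhds (Ici_sdiff_Ici_mem_principalDiffBasis hxj) ⟨self_mem_Ici, hxj.not_ge⟩)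
    (hB.mem_nhds (Ici_mem_principalDiffBasis y) self_mem_Ici)
  rw [disjoint_iff_inter_eq_empty, sdiff_inter_right_comm, hj, sdiff_self]

theorem t2Space_of_isTopologicalBasis [TopologicalSpace α] (h : HasBoundedPairSups α)
    (hB : IsTopologicalBasis (principalDiffBasis α)) : T2Space α := by
  refine t2Space_iff_disjoint_nhds.2 fun x y hxy => ?_
  rcases Ici_inter_Ici_eq_empty_or h x y with hxy' | ⟨j, hj⟩
  · exact Filter.disjoint_of_disjoint_of_mem (disjoint_iff_inter_eq_empty.2 hxy')
      (hB.mem_nhds (Ici_mem_principalDiffBasis x) self_mem_Ici)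
      (hB.mem_nhds (Ici_mem_principalDiffBasis y) self_mem_Ici)
  · by_cases hjx : j = x
    · subst hjx
      exact (disjoint_nhds_of_Ici_inter_Ici_eq hB (by rwa [inter_comm]) hxy).symm
    · exact disjoint_nhds_of_Ici_inter_Ici_eq hB hj hjx

end PrincipalDiff

namespace ISemi

variable {ι : Type*} {n : ℕ}

instance : PartialOrder (Elem ι n) := Subtype.partialOrder _

instance : OrderBot (Elem ι n) := Subtype.orderBot (zero ι n).2

theorem nle_iff_le {f g : Elem ι n} : nle f g ↔ f ≤ g := by
  constructor
  · rintro ⟨e, he, rfl⟩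
    exact PEquiv.trans_le_of_le_refl (PEquiv.le_refl_of_trans_self (congrArg Subtype.val he)) g.1
  · -- the idempotent `f f⁻¹` is the identity on the domain of `f`
    intro h
    exact ⟨f * inv f, Subtype.ext (PEquiv.self_trans_symm_trans_self_trans_symm f.1),
      Subtype.ext (PEquiv.self_trans_symm_trans_of_le h).symm⟩

lemma upset_eq_Ici (f : Elem ι n) : upset f = Ici f := Set.ext fun _ => nle_iff_le

lemma Bc_eq_principalDiffBasis : Bc ι n = principalDiffBasis (Elem ι n) := by
  simp only [Bc, principalDiffBasis, upset_eq_Ici, Ici_sdiff_left]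

theorem hasBoundedPairSups : HasBoundedPairSups (Elem ι n) := by
  classical
  rintro f g ⟨h, hh⟩
  simp only [mem_upperBounds, mem_insert_iff, mem_singleton_iff, forall_eq_or_imp,
    forall_eq] at hh
  set j := (PEquiv.ofSet ({a | (f.1 a).isSome} ∪ {a | (g.1 a).isSome})).trans h.1
  have hj : ∀ k : ι ≃. ι, j ≤ k ↔ f.1 ≤ k ∧ g.1 ≤ k := fun k =>
    PEquiv.ofSet_trans_le_iff hh.1 hh.2
  have hjn : {a | (j a).isSome}.encard ≤ n :=
    (encard_mono fun a => PEquiv.isSome_of_le ((hj h.1).2 hh)).trans h.2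
  refine ⟨⟨j, hjn⟩, isLUB_iff_le_iff.2 fun k => ?_⟩
  simp only [upperBounds_insert, upperBounds_singleton, mem_inter_iff, mem_Ici]
  exact hj k.1

lemma dom_ssubset_dom {f g : Elem ι n} (h : f < g) : dom f ⊂ dom g :=
  ssubset_of_subset_not_subset (fun _ => PEquiv.isSome_of_le h.le)
    fun hgf => h.ne (Subtype.ext (PEquiv.eq_of_le_of_isSome h.le hgf))

instance : WellFoundedGT (Elem ι n) := by
  refine StrictAnti.wellFoundedGT (f := fun f : Elem ι n => n - (dom f).ncard) fun f g hfg => ?_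
  obtain ⟨hfin, hle⟩ : (dom g).Finite ∧ (dom g).ncard ≤ n :=
    encard_le_coe_iff_finite_ncard_le.1 g.2
  have := ncard_lt_ncard (dom_ssubset_dom hfg) hfin
  dsimp only
  omega

end ISemi

open ISemi

theorem stmt12_general (ι : Type*) (n : ℕ) :
    @TopologicalSpace.IsTopologicalBasis (ISemi.Elem ι n) (tauc ι n) (Bc ι n) ∧
    @CompactSpace (ISemi.Elem ι n) (tauc ι n) ∧
    @T2Space (ISemi.Elem ι n) (tauc ι n) := by
  have hB : @IsTopologicalBasis _ (tauc ι n) (principalDiffBasis (Elem ι n)) := by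
    rw [tauc, Bc_eq_principalDiffBasis]
    exact isTopologicalBasis_principalDiffBasis hasBoundedPairSups
  let _ := tauc ι n
  exact ⟨Bc_eq_principalDiffBasis ▸ hB, compactSpace_of_isTopologicalBasis hasBoundedPairSups hB,
    t2Space_of_isTopologicalBasis hasBoundedPairSups hB⟩

theorem stmt12 (ι : Type*) [Infinite ι] (n : ℕ) (hn : 0 < n) :
    @TopologicalSpace.IsTopologicalBasis (ISemi.Elem ι n) (tauc ι n) (Bc ι n) ∧
    @CompactSpace (ISemi.Elem ι n) (tauc ι n) ∧
    @T2Space (ISemi.Elem ι n) (tauc ι n) :=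
  stmt12_general ι n
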